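/- arXiv:2209.11319 — 2 statements merged into one kernel-verified Lean document; each statement's English description precedes it below -/
import Mathlib

section
/- The number of perfect matchings in the complete tripartite graph K_{2m,2m,2m} (each class of size 2m) equals C(2m,m)^3 · (m!)^3. -/
open Nat SimpleGraph Finset


/-- The perfect matching built from an adjacency-respecting involution. -/
def funToPM {V : Type} (G : SimpleGraph V)
    (f : {f : V → V // (∀ v, G.Adj v (f v)) ∧ Function.Involutive f}) :
    {M : G.Subgraph // M.IsPerfectMatching} :=
  ⟨⟨Set.univ, fun v w => f.1 v = w ∧ G.Adj v w, fun h => h.2, fun _ => trivial,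
      ⟨fun v w h => ⟨by rw [← h.1]; exact f.2.2 v, h.2.symm⟩⟩⟩,
    ⟨fun v _ => ⟨f.1 v, ⟨rfl, f.2.1 v⟩, fun y hy => hy.1.symm⟩, fun v => Set.mem_univ v⟩⟩

/-- Perfect matchings of `G` correspond to adjacency-respecting involutions. -/
noncomputable def pmEquivFun {V : Type} (G : SimpleGraph V) :
    {M : G.Subgraph // M.IsPerfectMatching} ≃
      {f : V → V // (∀ v, G.Adj v (f v)) ∧ Function.Involutive f} where
  toFun M := ⟨fun v => (Subgraph.isPerfectMatching_iff.mp M.2 v).choose,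
    fun v => M.1.adj_sub (Subgraph.isPerfectMatching_iff.mp M.2 v).choose_spec.1,
    fun v => ((Subgraph.isPerfectMatching_iff.mp M.2 _).choose_spec.2 v
      (M.1.adj_symm (Subgraph.isPerfectMatching_iff.mp M.2 v).choose_spec.1)).symm⟩
  invFun := funToPM G
  left_inv M := by
    apply Subtype.ext
    apply SimpleGraph.Subgraph.ext
    · exact (Set.eq_univ_of_forall M.2.2).symm
    · ext v w
      constructor
      · rintro ⟨h1, _⟩
        exact h1 ▸ (Subgraph.isPerfectMatching_iff.mp M.2 v).choose_spec.1
      · intro h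
        exact ⟨((Subgraph.isPerfectMatching_iff.mp M.2 v).choose_spec.2 w h).symm,
          M.1.adj_sub h⟩
  right_inv f := by
    apply Subtype.ext
    funext v
    have h := (Subgraph.isPerfectMatching_iff.mp (funToPM G f).2 v).choose_spec.1
    exact (h.1).symm

abbrev V3 (m : ℕ) := (i : Fin 3) × Fin (2 * m)


lemma sigma_eq_mk {m : ℕ} {v : V3 m} {i : Fin 3} (h : v.1 = i) : v = ⟨i, v.2⟩ := by
  subst h; rfl

/-- the set of `x` in part `i` sent by `f` to part `j` -/
def pSet {m : ℕ} (f : V3 m → V3 m) (i j : Fin 3) : Finset (Fin (2 * m)) :=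
  Finset.univ.filter (fun x => (f ⟨i, x⟩).1 = j)

lemma mem_pSet {m : ℕ} {f : V3 m → V3 m} {i j : Fin 3} {x : Fin (2 * m)} :
    x ∈ pSet f i j ↔ (f ⟨i, x⟩).1 = j := by simp [pSet]

lemma pSet_card_symm {m : ℕ} {f : V3 m → V3 m} (hinv : Function.Involutive f) (i j : Fin 3) :
    (pSet f i j).card = (pSet f j i).card := by
  apply Finset.card_bij (fun x _ => (f ⟨i, x⟩).2)
  · intro x hx
    rw [mem_pSet] at hx ⊢
    rw [← sigma_eq_mk hx, hinv]
  · intro x hx x' hx' heq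
    rw [mem_pSet] at hx hx'
    have : f ⟨i, x⟩ = f ⟨i, x'⟩ := by
      rw [sigma_eq_mk hx, sigma_eq_mk hx', heq]
    simpa using hinv.injective this
  · intro y hy
    rw [mem_pSet] at hy
    refine ⟨(f ⟨j, y⟩).2, ?_, ?_⟩
    · rw [mem_pSet, ← sigma_eq_mk hy, hinv]
    · rw [← sigma_eq_mk hy, hinv]

lemma fin3_resolve : ∀ a i j k : Fin 3, i ≠ j → i ≠ k → j ≠ k → a ≠ i →
    (¬ a = j ↔ a = k) := by decide

lemma pSet_card_add {m : ℕ} {f : V3 m → V3 m} (hadj : ∀ v, v.1 ≠ (f v).1)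
    {i j k : Fin 3} (hij : i ≠ j) (hik : i ≠ k) (hjk : j ≠ k) :
    (pSet f i j).card + (pSet f i k).card = 2 * m := by
  have h := Finset.card_filter_add_card_filter_not
    (s := (Finset.univ : Finset (Fin (2 * m)))) (p := fun x => (f ⟨i, x⟩).1 = j)
  rw [Finset.card_univ, Fintype.card_fin] at h
  have h2 : Finset.univ.filter (fun a => ¬(f ⟨i, a⟩).1 = j) = pSet f i k := by
    ext x
    simp only [pSet, Finset.mem_filter, Finset.mem_univ, true_and]
    exact fin3_resolve (f ⟨i, x⟩).1 i j k hij hik hjk (Ne.symm (hadj ⟨i, x⟩))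
  rw [h2] at h
  exact h

lemma pSet_compl {m : ℕ} {f : V3 m → V3 m} (hadj : ∀ v, v.1 ≠ (f v).1)
    {i j k : Fin 3} (hij : i ≠ j) (hik : i ≠ k) (hjk : j ≠ k) :
    (pSet f i j)ᶜ = pSet f i k := by
  ext x
  rw [Finset.mem_compl, mem_pSet, mem_pSet]
  exact fin3_resolve (f ⟨i, x⟩).1 i j k hij hik hjk (Ne.symm (hadj ⟨i, x⟩))

lemma pSet_card_eq_m {m : ℕ} {f : V3 m → V3 m} (hadj : ∀ v, v.1 ≠ (f v).1)
    (hinv : Function.Involutive f) (i j : Fin 3) (hij : i ≠ j) :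
    (pSet f i j).card = m := by
  have e01 := pSet_card_symm hinv 0 1
  have e02 := pSet_card_symm hinv 0 2
  have e12 := pSet_card_symm hinv 1 2
  have p0 := pSet_card_add hadj (f := f) (i := 0) (j := 1) (k := 2)
    (by decide) (by decide) (by decide)
  have p1 := pSet_card_add hadj (f := f) (i := 1) (j := 0) (k := 2)
    (by decide) (by decide) (by decide)
  have p2 := pSet_card_add hadj (f := f) (i := 2) (j := 0) (k := 1)
    (by decide) (by decide) (by decide)
  have e10 := pSet_card_symm hinv 1 0
  have e20 := pSet_card_symm hinv 2 0
  have e21 := pSet_card_symm hinv 2 1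
  fin_cases i <;> fin_cases j <;> simp_all <;> omega

section Fiber
variable {m : ℕ} (A B C : Finset (Fin (2 * m)))

/-- build an involution from matching data -/
def mkF (e01 : {x // x ∈ A} ≃ {x // x ∈ B}) (e02 : {x // x ∈ Aᶜ} ≃ {x // x ∈ C})
    (e12 : {x // x ∈ Bᶜ} ≃ {x // x ∈ Cᶜ}) : V3 m → V3 m := fun v =>
  if v.1 = 0 then
    (if h : v.2 ∈ A then ⟨1, e01 ⟨v.2, h⟩⟩ else ⟨2, e02 ⟨v.2, Finset.mem_compl.mpr h⟩⟩)
  else if v.1 = 1 then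
    (if h : v.2 ∈ B then ⟨0, e01.symm ⟨v.2, h⟩⟩ else ⟨2, e12 ⟨v.2, Finset.mem_compl.mpr h⟩⟩)
  else
    (if h : v.2 ∈ C then ⟨0, e02.symm ⟨v.2, h⟩⟩ else ⟨1, e12.symm ⟨v.2, Finset.mem_compl.mpr h⟩⟩)

variable (e01 : {x // x ∈ A} ≃ {x // x ∈ B}) (e02 : {x // x ∈ Aᶜ} ≃ {x // x ∈ C})
    (e12 : {x // x ∈ Bᶜ} ≃ {x // x ∈ Cᶜ})

lemma mkF_0 (x : Fin (2 * m)) : mkF A B C e01 e02 e12 ⟨0, x⟩ =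
    (if h : x ∈ A then (⟨1, e01 ⟨x, h⟩⟩ : V3 m) else ⟨2, e02 ⟨x, Finset.mem_compl.mpr h⟩⟩) :=
  rfl

lemma mkF_1 (x : Fin (2 * m)) : mkF A B C e01 e02 e12 ⟨1, x⟩ =
    (if h : x ∈ B then (⟨0, e01.symm ⟨x, h⟩⟩ : V3 m) else ⟨2, e12 ⟨x, Finset.mem_compl.mpr h⟩⟩) :=
  rfl

lemma mkF_2 (x : Fin (2 * m)) : mkF A B C e01 e02 e12 ⟨2, x⟩ =
    (if h : x ∈ C then (⟨0, e02.symm ⟨x, h⟩⟩ : V3 m) else ⟨1, e12.symm ⟨x, Finset.mem_compl.mpr h⟩⟩) :=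
  rfl
end Fiber

section Fiber2
variable {m : ℕ} {A B C : Finset (Fin (2 * m))}
variable (e01 : {x // x ∈ A} ≃ {x // x ∈ B}) (e02 : {x // x ∈ Aᶜ} ≃ {x // x ∈ C})
    (e12 : {x // x ∈ Bᶜ} ≃ {x // x ∈ Cᶜ})

lemma fin3_cases (a : Fin 3) : a = 0 ∨ a = 1 ∨ a = 2 := by revert a; decide

lemma mkF_adj : ∀ v : V3 m, v.1 ≠ (mkF A B C e01 e02 e12 v).1 := by
  rintro ⟨i, x⟩
  rcases fin3_cases i with h | h | h <;> subst h
  · rw [mkF_0]; split <;> simp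
  · rw [mkF_1]; split <;> simp
  · rw [mkF_2]; split <;> simp

lemma mkF_invol : Function.Involutive (mkF A B C e01 e02 e12) := by
  rintro ⟨i, x⟩
  rcases fin3_cases i with h | h | h <;> subst h
  · rw [mkF_0]
    by_cases h : x ∈ A
    · rw [dif_pos h, mkF_1, dif_pos (e01 ⟨x, h⟩).2]
      simp
    · rw [dif_neg h, mkF_2, dif_pos (e02 ⟨x, Finset.mem_compl.mpr h⟩).2]
      simp
  · rw [mkF_1]
    by_cases h : x ∈ B
    · rw [dif_pos h, mkF_0, dif_pos (e01.symm ⟨x, h⟩).2]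
      simp
    · rw [dif_neg h, mkF_2,
        dif_neg (Finset.mem_compl.mp (e12 ⟨x, Finset.mem_compl.mpr h⟩).2)]
      simp
  · rw [mkF_2]
    by_cases h : x ∈ C
    · rw [dif_pos h, mkF_0,
        dif_neg (Finset.mem_compl.mp (e02.symm ⟨x, h⟩).2)]
      simp
    · rw [dif_neg h, mkF_1,
        dif_neg (Finset.mem_compl.mp (e12.symm ⟨x, Finset.mem_compl.mpr h⟩).2)]
      simp
end Fiber2

section Fiber3
variable {m : ℕ} {A B C : Finset (Fin (2 * m))}
variable (e01 : {x // x ∈ A} ≃ {x // x ∈ B}) (e02 : {x // x ∈ Aᶜ} ≃ {x // x ∈ C})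
    (e12 : {x // x ∈ Bᶜ} ≃ {x // x ∈ Cᶜ})

lemma mkF_pSet01 : pSet (mkF A B C e01 e02 e12) 0 1 = A := by
  ext x
  rw [mem_pSet, mkF_0]
  by_cases h : x ∈ A
  · simp [h]
  · simp [h, show (2 : Fin 3) ≠ 1 by decide]

lemma mkF_pSet10 : pSet (mkF A B C e01 e02 e12) 1 0 = B := by
  ext x
  rw [mem_pSet, mkF_1]
  by_cases h : x ∈ B
  · simp [h]
  · simp [h, show (2 : Fin 3) ≠ 0 by decide]

lemma mkF_pSet20 : pSet (mkF A B C e01 e02 e12) 2 0 = C := by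
  ext x
  rw [mem_pSet, mkF_2]
  by_cases h : x ∈ C
  · simp [h]
  · simp [h, show (1 : Fin 3) ≠ 0 by decide]
end Fiber3

section Extract
variable {m : ℕ} {A B C : Finset (Fin (2 * m))} {f : V3 m → V3 m}

/-- the bijection `A ≃ B` induced by `f` -/
def mkE01 (hinv : Function.Involutive f) (hA : pSet f 0 1 = A) (hB : pSet f 1 0 = B) :
    {x // x ∈ A} ≃ {x // x ∈ B} where
  toFun x := ⟨(f ⟨0, x.1⟩).2, by
    rw [← hB, mem_pSet, ← sigma_eq_mk (mem_pSet.mp (hA ▸ x.2)), hinv]⟩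
  invFun y := ⟨(f ⟨1, y.1⟩).2, by
    rw [← hA, mem_pSet, ← sigma_eq_mk (mem_pSet.mp (hB ▸ y.2)), hinv]⟩
  left_inv x := by
    apply Subtype.ext
    show (f ⟨1, (f ⟨0, x.1⟩).2⟩).2 = x.1
    rw [← sigma_eq_mk (mem_pSet.mp (hA ▸ x.2)), hinv]
  right_inv y := by
    apply Subtype.ext
    show (f ⟨0, (f ⟨1, y.1⟩).2⟩).2 = y.1
    rw [← sigma_eq_mk (mem_pSet.mp (hB ▸ y.2)), hinv]

lemma compl_eq_pSet02 (hadj : ∀ v : V3 m, v.1 ≠ (f v).1) (hA : pSet f 0 1 = A) :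
    Aᶜ = pSet f 0 2 := by
  rw [← hA, pSet_compl (i := 0) (j := 1) (k := 2) hadj (by decide) (by decide) (by decide)]

lemma compl_eq_pSet12 (hadj : ∀ v : V3 m, v.1 ≠ (f v).1) (hB : pSet f 1 0 = B) :
    Bᶜ = pSet f 1 2 := by
  rw [← hB, pSet_compl (i := 1) (j := 0) (k := 2) hadj (by decide) (by decide) (by decide)]

lemma compl_eq_pSet21 (hadj : ∀ v : V3 m, v.1 ≠ (f v).1) (hC : pSet f 2 0 = C) :
    Cᶜ = pSet f 2 1 := by
  rw [← hC, pSet_compl (i := 2) (j := 0) (k := 1) hadj (by decide) (by decide) (by decide)]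

/-- the bijection `Aᶜ ≃ C` induced by `f` -/
def mkE02 (hadj : ∀ v : V3 m, v.1 ≠ (f v).1) (hinv : Function.Involutive f)
    (hA : pSet f 0 1 = A) (hC : pSet f 2 0 = C) :
    {x // x ∈ Aᶜ} ≃ {x // x ∈ C} where
  toFun x := ⟨(f ⟨0, x.1⟩).2, by
    rw [← hC, mem_pSet,
      ← sigma_eq_mk (mem_pSet.mp ((compl_eq_pSet02 hadj hA) ▸ x.2)), hinv]⟩
  invFun y := ⟨(f ⟨2, y.1⟩).2, by
    rw [compl_eq_pSet02 hadj hA, mem_pSet,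
      ← sigma_eq_mk (mem_pSet.mp (hC ▸ y.2)), hinv]⟩
  left_inv x := by
    apply Subtype.ext
    show (f ⟨2, (f ⟨0, x.1⟩).2⟩).2 = x.1
    rw [← sigma_eq_mk (mem_pSet.mp ((compl_eq_pSet02 hadj hA) ▸ x.2)), hinv]
  right_inv y := by
    apply Subtype.ext
    show (f ⟨0, (f ⟨2, y.1⟩).2⟩).2 = y.1
    rw [← sigma_eq_mk (mem_pSet.mp (hC ▸ y.2)), hinv]

/-- the bijection `Bᶜ ≃ Cᶜ` induced by `f` -/
def mkE12 (hadj : ∀ v : V3 m, v.1 ≠ (f v).1) (hinv : Function.Involutive f)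
    (hB : pSet f 1 0 = B) (hC : pSet f 2 0 = C) :
    {x // x ∈ Bᶜ} ≃ {x // x ∈ Cᶜ} where
  toFun x := ⟨(f ⟨1, x.1⟩).2, by
    rw [compl_eq_pSet21 hadj hC, mem_pSet,
      ← sigma_eq_mk (mem_pSet.mp ((compl_eq_pSet12 hadj hB) ▸ x.2)), hinv]⟩
  invFun y := ⟨(f ⟨2, y.1⟩).2, by
    rw [compl_eq_pSet12 hadj hB, mem_pSet,
      ← sigma_eq_mk (mem_pSet.mp ((compl_eq_pSet21 hadj hC) ▸ y.2)), hinv]⟩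
  left_inv x := by
    apply Subtype.ext
    show (f ⟨2, (f ⟨1, x.1⟩).2⟩).2 = x.1
    rw [← sigma_eq_mk (mem_pSet.mp ((compl_eq_pSet12 hadj hB) ▸ x.2)), hinv]
  right_inv y := by
    apply Subtype.ext
    show (f ⟨1, (f ⟨2, y.1⟩).2⟩).2 = y.1
    rw [← sigma_eq_mk (mem_pSet.mp ((compl_eq_pSet21 hadj hC) ▸ y.2)), hinv]
end Extract

/-- the complete tripartite graph -/
def GKm (m : ℕ) : SimpleGraph (V3 m) := completeMultipartiteGraph (fun _ : Fin 3 => Fin (2 * m))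

/-- adjacency-respecting involutions on `V3 m` -/
def Phi (m : ℕ) :=
  {f : V3 m → V3 m // (∀ v, (GKm m).Adj v (f v)) ∧ Function.Involutive f}

def phiAdj {m : ℕ} (f : Phi m) : ∀ v : V3 m, v.1 ≠ (f.1 v).1 := fun v => f.2.1 v

/-- The fiber of involutions with given part-sets is equivalent to a triple of bijections. -/
def fiberEquiv {m : ℕ} (A B C : Finset (Fin (2 * m))) :
    {f : Phi m // pSet f.1 0 1 = A ∧ pSet f.1 1 0 = B ∧ pSet f.1 2 0 = C} ≃
      ({x // x ∈ A} ≃ {x // x ∈ B}) × ({x // x ∈ Aᶜ} ≃ {x // x ∈ C}) ×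
        ({x // x ∈ Bᶜ} ≃ {x // x ∈ Cᶜ}) where
  toFun F := (mkE01 F.1.2.2 F.2.1 F.2.2.1,
    mkE02 (phiAdj F.1) F.1.2.2 F.2.1 F.2.2.2,
    mkE12 (phiAdj F.1) F.1.2.2 F.2.2.1 F.2.2.2)
  invFun e := ⟨⟨mkF A B C e.1 e.2.1 e.2.2,
      fun v => (mkF_adj e.1 e.2.1 e.2.2 v : _),
      mkF_invol e.1 e.2.1 e.2.2⟩,
    mkF_pSet01 e.1 e.2.1 e.2.2, mkF_pSet10 e.1 e.2.1 e.2.2, mkF_pSet20 e.1 e.2.1 e.2.2⟩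
  left_inv F := by
    obtain ⟨⟨f, hadjf, hinv⟩, hA, hB, hC⟩ := F
    apply Subtype.ext
    apply Subtype.ext
    funext v
    show mkF A B C _ _ _ v = f v
    have hadj : ∀ v : V3 m, v.1 ≠ (f v).1 := fun v => hadjf v
    obtain ⟨i, x⟩ := v
    rcases fin3_cases i with h | h | h <;> subst h
    · rw [mkF_0]
      by_cases h : x ∈ A
      · rw [dif_pos h]
        exact (sigma_eq_mk (mem_pSet.mp (hA ▸ h))).symm
      · rw [dif_neg h]
        exact (sigma_eq_mk (mem_pSet.mp
          ((compl_eq_pSet02 hadj hA) ▸ Finset.mem_compl.mpr h))).symm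
    · rw [mkF_1]
      by_cases h : x ∈ B
      · rw [dif_pos h]
        exact (sigma_eq_mk (mem_pSet.mp (hB ▸ h))).symm
      · rw [dif_neg h]
        exact (sigma_eq_mk (mem_pSet.mp
          ((compl_eq_pSet12 hadj hB) ▸ Finset.mem_compl.mpr h))).symm
    · rw [mkF_2]
      by_cases h : x ∈ C
      · rw [dif_pos h]
        exact (sigma_eq_mk (mem_pSet.mp (hC ▸ h))).symm
      · rw [dif_neg h]
        exact (sigma_eq_mk (mem_pSet.mp
          ((compl_eq_pSet21 hadj hC) ▸ Finset.mem_compl.mpr h))).symm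
  right_inv e := by
    obtain ⟨e01, e02, e12⟩ := e
    simp only [Prod.mk.injEq]
    refine ⟨?_, ?_, ?_⟩
    · apply Equiv.ext
      rintro ⟨x, hx⟩
      apply Subtype.ext
      show (mkF A B C e01 e02 e12 ⟨0, x⟩).2 = ↑(e01 ⟨x, hx⟩)
      rw [mkF_0, dif_pos hx]
    · apply Equiv.ext
      rintro ⟨x, hx⟩
      apply Subtype.ext
      show (mkF A B C e01 e02 e12 ⟨0, x⟩).2 = ↑(e02 ⟨x, hx⟩)
      rw [mkF_0, dif_neg (Finset.mem_compl.mp hx)]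
    · apply Equiv.ext
      rintro ⟨x, hx⟩
      apply Subtype.ext
      show (mkF A B C e01 e02 e12 ⟨1, x⟩).2 = ↑(e12 ⟨x, hx⟩)
      rw [mkF_1, dif_neg (Finset.mem_compl.mp hx)]

abbrev Tm (m : ℕ) := {S : Finset (Fin (2 * m)) // S.card = m}

def partsMap {m : ℕ} (f : Phi m) : Tm m × Tm m × Tm m :=
  (⟨pSet f.1 0 1, pSet_card_eq_m (phiAdj f) f.2.2 0 1 (by decide)⟩,
   ⟨pSet f.1 1 0, pSet_card_eq_m (phiAdj f) f.2.2 1 0 (by decide)⟩,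
   ⟨pSet f.1 2 0, pSet_card_eq_m (phiAdj f) f.2.2 2 0 (by decide)⟩)

abbrev fiberTy {m : ℕ} (t : Tm m × Tm m × Tm m) :=
  ({x // x ∈ t.1.1} ≃ {x // x ∈ t.2.1.1}) × ({x // x ∈ t.1.1ᶜ} ≃ {x // x ∈ t.2.2.1}) ×
    ({x // x ∈ t.2.1.1ᶜ} ≃ {x // x ∈ t.2.2.1ᶜ})

def fiberEquiv' {m : ℕ} (t : Tm m × Tm m × Tm m) :
    {f : Phi m // partsMap f = t} ≃ fiberTy t :=
  (Equiv.subtypeEquivRight (fun f => by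
    simp only [partsMap, Prod.ext_iff, Subtype.ext_iff])).trans
    (fiberEquiv t.1.1 t.2.1.1 t.2.2.1)

noncomputable def bigEquiv (m : ℕ) :
    {M : (GKm m).Subgraph // M.IsPerfectMatching} ≃ Σ t : Tm m × Tm m × Tm m, fiberTy t :=
  (pmEquivFun (GKm m)).trans
    ((Equiv.sigmaFiberEquiv partsMap).symm.trans (Equiv.sigmaCongrRight fiberEquiv'))

theorem card_fiberTy {m : ℕ} (t : Tm m × Tm m × Tm m) : Nat.card (fiberTy t) = (m !) ^ 3 := by
  obtain ⟨⟨A, hA⟩, ⟨B, hB⟩, ⟨C, hC⟩⟩ := t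
  have cA : Fintype.card {x // x ∈ A} = m := by simpa using hA
  have cB : Fintype.card {x // x ∈ B} = m := by simpa using hB
  have cC : Fintype.card {x // x ∈ C} = m := by simpa using hC
  have cA' : Fintype.card {x // x ∈ Aᶜ} = m := by
    simp only [Fintype.card_coe, Finset.card_compl, Fintype.card_fin, hA]; omega
  have cB' : Fintype.card {x // x ∈ Bᶜ} = m := by
    simp only [Fintype.card_coe, Finset.card_compl, Fintype.card_fin, hB]; omega
  have cC' : Fintype.card {x // x ∈ Cᶜ} = m := by
    simp only [Fintype.card_coe, Finset.card_compl, Fintype.card_fin, hC]; omega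
  rw [Nat.card_eq_fintype_card, Fintype.card_prod, Fintype.card_prod,
    Fintype.card_equiv (Fintype.equivOfCardEq (cA.trans cB.symm)),
    Fintype.card_equiv (Fintype.equivOfCardEq (cA'.trans cC.symm)),
    Fintype.card_equiv (Fintype.equivOfCardEq (cB'.trans cC'.symm)), cA, cA', cB']
  ring

/-- The number of perfect matchings of a graph `G`. -/
noncomputable def pmCount {V : Type} (G : SimpleGraph V) : ℕ :=
  {M : G.Subgraph | M.IsPerfectMatching}.ncard

/-- The balanced complete tripartite graph `K_{2m,2m,2m}` has exactly
`C(2m,m)^3 (m!)^3` perfect matchings. -/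
theorem stmt_7 (m : ℕ) :
    pmCount (completeMultipartiteGraph (fun _ : Fin 3 => Fin (2 * m))) =
      ((2 * m).choose m) ^ 3 * (m !) ^ 3 := by
  show pmCount (GKm m) = _
  calc pmCount (GKm m)
      = Nat.card {M : (GKm m).Subgraph // M.IsPerfectMatching} :=
        (Nat.card_coe_set_eq _).symm
    _ = Nat.card (Σ t : Tm m × Tm m × Tm m, fiberTy t) := Nat.card_congr (bigEquiv m)
    _ = Fintype.card (Σ t : Tm m × Tm m × Tm m, fiberTy t) := Nat.card_eq_fintype_card
    _ = ∑ t : Tm m × Tm m × Tm m, Fintype.card (fiberTy t) := Fintype.card_sigma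
    _ = ∑ _t : Tm m × Tm m × Tm m, (m !) ^ 3 := by
        apply Finset.sum_congr rfl
        intro t _
        rw [← Nat.card_eq_fintype_card, card_fiberTy]
    _ = Fintype.card (Tm m × Tm m × Tm m) * (m !) ^ 3 := by
        rw [Finset.sum_const, Finset.card_univ, smul_eq_mul]
    _ = ((2 * m).choose m) ^ 3 * (m !) ^ 3 := by
        simp only [Fintype.card_prod, Fintype.card_finset_len, Fintype.card_fin]
        ring
end

section
/- (Godsil–Zaslavsky identity) For any graph G on 2n vertices, pm(G) = ∑_{k=0}^n (-1)^k μ_k(Ḡ) (2n-2k-1)!!, where Ḡ is the complement of G and μ_k counts k-edge matchings. -/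
open Nat SimpleGraph Finset

variable {V : Type}

/-- `s` is a perfect matching of the finset `A`: a set of non-diagonal edges with
endpoints in `A`, covering each point of `A` exactly once. -/
def pmatch (A : Finset V) (s : Finset (Sym2 V)) : Prop :=
  (∀ e ∈ s, ¬ e.IsDiag) ∧ (∀ e ∈ s, ∀ v ∈ e, v ∈ A) ∧ (∀ a ∈ A, ∃! e, e ∈ s ∧ a ∈ e)

/-- `s` is a (partial) matching: non-diagonal, pairwise disjoint edges. -/
def mset (s : Finset (Sym2 V)) : Prop :=
  (∀ e ∈ s, ¬ e.IsDiag) ∧ ∀ e ∈ s, ∀ f ∈ s, ∀ v, v ∈ e → v ∈ f → e = f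

lemma pmatch.mset {A : Finset V} {s : Finset (Sym2 V)} (h : pmatch A s) : mset s := by
  obtain ⟨h1, h2, h3⟩ := h
  refine ⟨h1, fun e he f hf v hve hvf => ?_⟩
  obtain ⟨g, -, hg⟩ := h3 v (h2 e he v hve)
  rw [hg e ⟨he, hve⟩, hg f ⟨hf, hvf⟩]

lemma mset.subset {s t : Finset (Sym2 V)} (h : mset t) (hst : s ⊆ t) : mset s :=
  ⟨fun e he => h.1 e (hst he), fun e he f hf => h.2 e (hst he) f (hst hf)⟩

lemma pmatch.card {A : Finset V} {s : Finset (Sym2 V)} (h : pmatch A s) :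
    A.card = 2 * s.card := by
  classical
  obtain ⟨h1, h2, h3⟩ := h
  have hf : ∀ a ∈ A, ∃ e, e ∈ s ∧ a ∈ e := fun a ha => (h3 a ha).exists
  set f : V → Sym2 V := fun a => if h : ∃ e, e ∈ s ∧ a ∈ e then h.choose else s(a, a) with hfdef
  have hmem : ∀ a ∈ A, f a ∈ s ∧ a ∈ f a := by
    intro a ha
    simp only [hfdef, dif_pos (hf a ha)]
    exact (hf a ha).choose_spec
  have := Finset.card_eq_sum_card_fiberwise (f := f) (s := A) (t := s)
    (fun a ha => (hmem a ha).1)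
  rw [this]
  have hfib : ∀ e ∈ s, (A.filter (fun a => f a = e)).card = 2 := by
    intro e he
    induction e using Sym2.inductionOn with
    | hf x y =>
      have hxy : x ≠ y := by
        intro h; exact h1 _ he (by simp [h])
      have huniq : ∀ a, a ∈ A → a ∈ s(x, y) → f a = s(x, y) := by
        intro a ha hae
        exact (h3 a ha).unique ⟨(hmem a ha).1, (hmem a ha).2⟩ ⟨he, hae⟩
      have : A.filter (fun a => f a = s(x, y)) = {x, y} := by
        ext a
        simp only [Finset.mem_filter, Finset.mem_insert, Finset.mem_singleton]
        constructor
        · rintro ⟨ha, hfa⟩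
          have : a ∈ s(x, y) := hfa ▸ (hmem a ha).2
          simpa [Sym2.mem_iff] using this
        · rintro h
          have hmem2 : a ∈ s(x, y) := by simp [Sym2.mem_iff, h]
          have haA : a ∈ A := h2 _ he a hmem2
          exact ⟨haA, huniq a haA hmem2⟩
      rw [this, Finset.card_pair hxy]
  rw [Finset.sum_congr rfl hfib, Finset.sum_const, smul_eq_mul, Nat.mul_comm]

lemma pmatch_erase [DecidableEq V] {A : Finset V} {s : Finset (Sym2 V)} {v0 w : V}
    (hA : pmatch A s) (he0 : s(v0, w) ∈ s) :
    pmatch ((A.erase v0).erase w) (s.erase s(v0, w)) := by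
  obtain ⟨h1, h2, h3⟩ := hA
  have hv0A : v0 ∈ A := h2 _ he0 v0 (Sym2.mem_mk_left _ _)
  have hwA : w ∈ A := h2 _ he0 w (Sym2.mem_mk_right _ _)
  refine ⟨fun e he => h1 e (Finset.mem_of_mem_erase he), ?_, ?_⟩
  · intro f hf v hvf
    have hfs : f ∈ s := Finset.mem_of_mem_erase hf
    have hfne : f ≠ s(v0, w) := Finset.ne_of_mem_erase hf
    have hvA : v ∈ A := h2 f hfs v hvf
    have hvv0 : v ≠ v0 := by
      rintro rfl
      exact hfne ((h3 v hvA).unique ⟨hfs, hvf⟩ ⟨he0, Sym2.mem_mk_left _ _⟩)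
    have hvw : v ≠ w := by
      rintro rfl
      exact hfne ((h3 v hvA).unique ⟨hfs, hvf⟩ ⟨he0, Sym2.mem_mk_right _ _⟩)
    exact Finset.mem_erase.2 ⟨hvw, Finset.mem_erase.2 ⟨hvv0, hvA⟩⟩
  · intro a ha
    obtain ⟨haw, hav0, haA⟩ : a ≠ w ∧ a ≠ v0 ∧ a ∈ A := by
      obtain ⟨h4, h5⟩ := Finset.mem_erase.1 ha
      obtain ⟨h6, h7⟩ := Finset.mem_erase.1 h5
      exact ⟨h4, h6, h7⟩
    obtain ⟨e, ⟨hes, hae⟩, hu⟩ := h3 a haA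
    have hene : e ≠ s(v0, w) := by
      rintro rfl
      rcases Sym2.mem_iff.1 hae with h | h
      exacts [hav0 h, haw h]
    exact ⟨e, ⟨Finset.mem_erase.2 ⟨hene, hes⟩, hae⟩,
      fun f ⟨hf, haf⟩ => hu f ⟨Finset.mem_of_mem_erase hf, haf⟩⟩

lemma pmatch_insert [DecidableEq V] {A : Finset V} {t : Finset (Sym2 V)} {v0 w : V}
    (hA' : pmatch ((A.erase v0).erase w) t) (hv0 : v0 ∈ A) (hw : w ∈ A) (hvw : v0 ≠ w) :
    pmatch A (insert s(v0, w) t) ∧ s(v0, w) ∉ t := by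
  obtain ⟨h1, h2, h3⟩ := hA'
  have hnotin : ∀ f ∈ t, v0 ∉ f ∧ w ∉ f := by
    intro f hf
    constructor
    · intro h
      have := h2 f hf v0 h
      exact (Finset.mem_erase.1 (Finset.mem_erase.1 this).2).1 rfl
    · intro h
      exact (Finset.mem_erase.1 (h2 f hf w h)).1 rfl
  have he0t : s(v0, w) ∉ t := fun h => (hnotin _ h).1 (Sym2.mem_mk_left _ _)
  refine ⟨⟨?_, ?_, ?_⟩, he0t⟩
  · intro e he
    rcases Finset.mem_insert.1 he with rfl | he
    · exact fun h => hvw (Sym2.mk_isDiag_iff.1 h)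
    · exact h1 e he
  · intro e he v hv
    rcases Finset.mem_insert.1 he with rfl | he
    · rcases Sym2.mem_iff.1 hv with rfl | rfl
      exacts [hv0, hw]
    · exact Finset.mem_of_mem_erase (Finset.mem_of_mem_erase (h2 e he v hv))
  · intro a ha
    by_cases hav : a = v0 ∨ a = w
    · refine ⟨s(v0, w), ⟨Finset.mem_insert_self _ _, by
        rcases hav with rfl | rfl
        exacts [Sym2.mem_mk_left _ _, Sym2.mem_mk_right _ _]⟩, ?_⟩
      rintro f ⟨hf, haf⟩
      rcases Finset.mem_insert.1 hf with h | hft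
      · exact h
      · exfalso
        rcases hav with rfl | rfl
        exacts [(hnotin f hft).1 haf, (hnotin f hft).2 haf]
    · push_neg at hav
      have haA' : a ∈ (A.erase v0).erase w :=
        Finset.mem_erase.2 ⟨hav.2, Finset.mem_erase.2 ⟨hav.1, ha⟩⟩
      obtain ⟨e, ⟨het, hae⟩, hu⟩ := h3 a haA'
      refine ⟨e, ⟨Finset.mem_insert_of_mem het, hae⟩, ?_⟩
      rintro f ⟨hf, haf⟩
      rcases Finset.mem_insert.1 hf with rfl | hf
      · exfalso
        rcases Sym2.mem_iff.1 haf with rfl | rfl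
        exacts [hav.1 rfl, hav.2 rfl]
      · exact hu f ⟨hf, haf⟩

lemma pm_step' [DecidableEq V] {A : Finset V} {v0 w : V} (t : Finset (Sym2 V))
    (hv0 : v0 ∈ A) (hw : w ∈ A) (hvw : v0 ≠ w) (he0t : s(v0, w) ∉ t) :
    {s : Finset (Sym2 V) | pmatch A s ∧ insert s(v0, w) t ⊆ s}.ncard
      = {s : Finset (Sym2 V) | pmatch ((A.erase v0).erase w) s ∧ t ⊆ s}.ncard := by
  have hinj : Set.InjOn (fun s : Finset (Sym2 V) => s.erase s(v0, w))
      {s | pmatch A s ∧ insert s(v0, w) t ⊆ s} := by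
    rintro s1 ⟨-, h1⟩ s2 ⟨-, h2⟩ h
    have e1 : s(v0, w) ∈ s1 := h1 (Finset.mem_insert_self _ _)
    have e2 : s(v0, w) ∈ s2 := h2 (Finset.mem_insert_self _ _)
    rw [← Finset.insert_erase e1, ← Finset.insert_erase e2]
    simpa using congrArg (insert s(v0, w)) h
  have himg : (fun s : Finset (Sym2 V) => s.erase s(v0, w)) ''
      {s | pmatch A s ∧ insert s(v0, w) t ⊆ s}
      = {s | pmatch ((A.erase v0).erase w) s ∧ t ⊆ s} := by
    ext q
    constructor
    · rintro ⟨s, ⟨hp, hsub⟩, rfl⟩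
      refine ⟨pmatch_erase hp (hsub (Finset.mem_insert_self _ _)), ?_⟩
      intro f hf
      refine Finset.mem_erase.2 ⟨fun h => he0t (h ▸ hf), hsub (Finset.mem_insert_of_mem hf)⟩
    · rintro ⟨hp, hsub⟩
      obtain ⟨hins, hnq⟩ := pmatch_insert hp hv0 hw hvw
      refine ⟨insert s(v0, w) q, ⟨hins, Finset.insert_subset_insert _ hsub⟩, ?_⟩
      simp only
      rw [Finset.erase_insert hnq]
  rw [← himg, Set.ncard_image_of_injOn hinj]

lemma ncard_filter [DecidableEq V] {B : Finset V} (p : Finset (Sym2 V) → Prop) [DecidablePred p]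
    (hp : ∀ s, p s → s ⊆ B.sym2) :
    {s : Finset (Sym2 V) | p s}.ncard = (B.sym2.powerset.filter p).card := by
  rw [← Set.ncard_coe_finset]
  congr 1
  ext s
  simp only [Set.mem_setOf_eq, Finset.coe_filter, Finset.mem_powerset]
  exact ⟨fun h => ⟨hp s h, h⟩, fun h => h.2⟩

lemma df_step (m : ℕ) : (2 * (m + 1) - 1)‼ = (2 * (m + 1) - 1) * (2 * m - 1)‼ := by
  cases m with
  | zero => decide
  | succ m =>
    have h : 2 * (m + 1 + 1) - 1 = (2 * (m + 1) - 1) + 2 := by omega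
    rw [h, Nat.doubleFactorial_add_two]

lemma count_pm [DecidableEq V] :
    ∀ (m : ℕ) (A : Finset V), A.card = 2 * m →
      {s : Finset (Sym2 V) | pmatch A s}.ncard = (2 * m - 1)‼ := by
  intro m
  induction m with
  | zero =>
    intro A hA
    rw [Finset.card_eq_zero] at hA
    subst hA
    have h : {s : Finset (Sym2 V) | pmatch ∅ s} = {∅} := by
      ext s
      simp only [Set.mem_setOf_eq, Set.mem_singleton_iff]
      constructor
      · intro h
        by_contra hne
        obtain ⟨e, he⟩ := Finset.nonempty_iff_ne_empty.2 hne
        exact absurd (h.2.1 e he e.out.1 (Sym2.out_fst_mem e)) (Finset.notMem_empty _)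
      · rintro rfl
        exact ⟨by simp, by simp, by simp⟩
    rw [h, Set.ncard_singleton]; rfl
  | succ m ih =>
    intro A hA
    classical
    have hApos : 0 < A.card := by omega
    obtain ⟨v0, hv0⟩ := Finset.card_pos.1 hApos
    have hsub : ∀ s, pmatch A s → s ⊆ A.sym2 := fun s hs e he =>
      Finset.mem_sym2_iff.2 (hs.2.1 e he)
    rw [ncard_filter _ hsub]
    have hunion : A.sym2.powerset.filter (pmatch A) =
        (A.erase v0).biUnion
          (fun w => A.sym2.powerset.filter (fun s => pmatch A s ∧ s(v0, w) ∈ s)) := by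
      ext s
      simp only [Finset.mem_biUnion, Finset.mem_filter, Finset.mem_powerset, Finset.mem_erase]
      constructor
      · rintro ⟨hss, hp⟩
        obtain ⟨e, ⟨hes, hv0e⟩, -⟩ := hp.2.2 v0 hv0
        have hew : s(v0, Sym2.Mem.other hv0e) = e := Sym2.other_spec hv0e
        refine ⟨Sym2.Mem.other hv0e, ⟨?_, hp.2.1 e hes _ (Sym2.other_mem hv0e)⟩,
          hss, hp, by rw [hew]; exact hes⟩
        intro h
        exact hp.1 e hes (by rw [← hew, h]; exact Sym2.mk_isDiag_iff.2 rfl)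
      · rintro ⟨w, -, hss, hp, -⟩
        exact ⟨hss, hp⟩
    have hdisj : ∀ w1 ∈ A.erase v0, ∀ w2 ∈ A.erase v0, w1 ≠ w2 →
        Disjoint (A.sym2.powerset.filter (fun s => pmatch A s ∧ s(v0, w1) ∈ s))
          (A.sym2.powerset.filter (fun s => pmatch A s ∧ s(v0, w2) ∈ s)) := by
      intro w1 _ w2 _ hne
      rw [Finset.disjoint_left]
      rintro s hs1 hs2
      obtain ⟨-, hp, he1⟩ := Finset.mem_filter.1 hs1
      obtain ⟨-, -, he2⟩ := Finset.mem_filter.1 hs2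
      exact hne (Sym2.congr_right.1
        ((hp.2.2 v0 hv0).unique ⟨he1, Sym2.mem_mk_left _ _⟩ ⟨he2, Sym2.mem_mk_left _ _⟩))
    rw [hunion, Finset.card_biUnion hdisj]
    have heach : ∀ w ∈ A.erase v0,
        (A.sym2.powerset.filter (fun s => pmatch A s ∧ s(v0, w) ∈ s)).card = (2 * m - 1)‼ := by
      intro w hw
      obtain ⟨hwv0, hwA⟩ := Finset.mem_erase.1 hw
      rw [← ncard_filter (fun s => pmatch A s ∧ s(v0, w) ∈ s) (fun s hs => hsub s hs.1)]
      have h1 : {s : Finset (Sym2 V) | pmatch A s ∧ s(v0, w) ∈ s}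
          = {s : Finset (Sym2 V) | pmatch A s ∧ insert s(v0, w) ∅ ⊆ s} := by
        ext s; simp
      rw [h1, pm_step' ∅ hv0 hwA (Ne.symm hwv0) (Finset.notMem_empty _)]
      have h2 : {s : Finset (Sym2 V) | pmatch ((A.erase v0).erase w) s ∧ ∅ ⊆ s}
          = {s : Finset (Sym2 V) | pmatch ((A.erase v0).erase w) s} := by
        ext s; simp
      rw [h2]
      apply ih
      rw [Finset.card_erase_of_mem hw, Finset.card_erase_of_mem hv0]
      omega
    rw [Finset.sum_congr rfl heach, Finset.sum_const, smul_eq_mul,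
      Finset.card_erase_of_mem hv0, hA, df_step]

lemma count_ext [DecidableEq V] :
    ∀ (t : Finset (Sym2 V)) (m : ℕ) (A : Finset V), A.card = 2 * m → mset t →
      (∀ e ∈ t, ∀ v ∈ e, v ∈ A) →
      t.card ≤ m ∧
        {P : Finset (Sym2 V) | pmatch A P ∧ t ⊆ P}.ncard = (2 * (m - t.card) - 1)‼ := by
  intro t
  induction t using Finset.induction_on with
  | empty =>
    intro m A hA _ _
    refine ⟨by simp, ?_⟩
    have h : {P : Finset (Sym2 V) | pmatch A P ∧ ∅ ⊆ P} = {P | pmatch A P} := by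
      ext P; simp
    rw [h, count_pm m A hA]
    simp
  | @insert e0 t he0t ih =>
    intro m A hA hmset hend
    have hrep : ∃ v w, s(v, w) = e0 := by
      induction e0 using Sym2.inductionOn with
      | hf x y => exact ⟨x, y, rfl⟩
    obtain ⟨v0, w, rfl⟩ := hrep
    have hvw : v0 ≠ w := fun h =>
      hmset.1 _ (Finset.mem_insert_self _ _) (Sym2.mk_isDiag_iff.2 h)
    have hv0A : v0 ∈ A := hend _ (Finset.mem_insert_self _ _) v0 (Sym2.mem_mk_left _ _)
    have hwA : w ∈ A := hend _ (Finset.mem_insert_self _ _) w (Sym2.mem_mk_right _ _)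
    have hm : 1 ≤ m := by
      have := Finset.one_lt_card.2 ⟨v0, hv0A, w, hwA, hvw⟩
      omega
    have hwA' : w ∈ A.erase v0 := Finset.mem_erase.2 ⟨Ne.symm hvw, hwA⟩
    have hA' : ((A.erase v0).erase w).card = 2 * (m - 1) := by
      rw [Finset.card_erase_of_mem hwA', Finset.card_erase_of_mem hv0A]
      omega
    have hmt : mset t := hmset.subset (Finset.subset_insert _ _)
    have hend' : ∀ e ∈ t, ∀ v ∈ e, v ∈ (A.erase v0).erase w := by
      intro f hf v hvf
      have hvA := hend f (Finset.mem_insert_of_mem hf) v hvf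
      have hv0 : v ≠ v0 := by
        rintro rfl
        have heq := hmset.2 f (Finset.mem_insert_of_mem hf) s(v, w)
          (Finset.mem_insert_self _ _) v hvf (Sym2.mem_mk_left _ _)
        exact he0t (heq ▸ hf)
      have hvw2 : v ≠ w := by
        rintro rfl
        have heq := hmset.2 f (Finset.mem_insert_of_mem hf) s(v0, v)
          (Finset.mem_insert_self _ _) v hvf (Sym2.mem_mk_right _ _)
        exact he0t (heq ▸ hf)
      exact Finset.mem_erase.2 ⟨hvw2, Finset.mem_erase.2 ⟨hv0, hvA⟩⟩
    obtain ⟨hle, hcard⟩ := ih (m - 1) ((A.erase v0).erase w) hA' hmt hend'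
    constructor
    · rw [Finset.card_insert_of_notMem he0t]; omega
    · rw [pm_step' t hv0A hwA hvw he0t, hcard, Finset.card_insert_of_notMem he0t]
      congr 2
      omega

/-- `matchCount G k` is the number of matchings of `G` with exactly `k` edges. -/
noncomputable def matchCount {V : Type} (G : SimpleGraph V) (k : ℕ) : ℕ :=
  {M : G.Subgraph | M.IsMatching ∧ M.edgeSet.ncard = k}.ncard

/-- The subgraph built from a set of edges. -/
def msub {V : Type} (H : SimpleGraph V) (s : Finset (Sym2 V)) (hs : ↑s ⊆ H.edgeSet) :
    H.Subgraph where
  verts := {v | ∃ e ∈ s, v ∈ e}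
  Adj v w := s(v, w) ∈ s
  adj_sub := fun h' => (SimpleGraph.mem_edgeSet H).1 (hs h')
  edge_vert := fun h' => ⟨_, h', Sym2.mem_mk_left _ _⟩
  symm := ⟨fun v w h' => by
    show s(w, v) ∈ s
    rw [Sym2.eq_swap]
    exact h'⟩

lemma msub_edgeSet {V : Type} (H : SimpleGraph V) (s : Finset (Sym2 V))
    (hs : ↑s ⊆ H.edgeSet) : (msub H s hs).edgeSet = ↑s := by
  ext e
  induction e using Sym2.inductionOn with
  | hf x y => rfl

lemma msub_isMatching {V : Type} (H : SimpleGraph V) (s : Finset (Sym2 V))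
    (hs : ↑s ⊆ H.edgeSet) (hm : mset s) : (msub H s hs).IsMatching := by
  rintro v ⟨e, hes, hve⟩
  have hrep := Sym2.other_spec hve
  refine ⟨Sym2.Mem.other hve, ?_, ?_⟩
  · show s(v, _) ∈ s
    rw [hrep]; exact hes
  · intro b hb
    have hbs : s(v, b) ∈ s := hb
    have : s(v, b) = e := hm.2 _ hbs e hes v (Sym2.mem_mk_left _ _) hve
    rw [← hrep] at this
    exact Sym2.congr_right.1 this

lemma matching_unique_edge {V : Type} {H : SimpleGraph V} {M : H.Subgraph}
    (hM : M.IsMatching) {v : V} (hv : v ∈ M.verts) :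
    ∃! e, e ∈ M.edgeSet ∧ v ∈ e := by
  obtain ⟨w, hw, hu⟩ := hM hv
  refine ⟨s(v, w), ⟨SimpleGraph.Subgraph.mem_edgeSet.2 hw, Sym2.mem_mk_left _ _⟩, ?_⟩
  rintro f ⟨hfE, hvf⟩
  have hrep := Sym2.other_spec hvf
  have : M.Adj v (Sym2.Mem.other hvf) := by
    rw [← SimpleGraph.Subgraph.mem_edgeSet, hrep]; exact hfE
  rw [← hrep, hu _ this]

lemma matching_edge_nondiag {V : Type} {H : SimpleGraph V} {M : H.Subgraph}
    (e : Sym2 V) (he : e ∈ M.edgeSet) : ¬ e.IsDiag := by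
  induction e using Sym2.inductionOn with
  | hf x y =>
    intro hd
    exact (SimpleGraph.Subgraph.mem_edgeSet.1 he).ne (Sym2.mk_isDiag_iff.1 hd)

lemma matching_mset {V : Type} {H : SimpleGraph V} {M : H.Subgraph}
    (hM : M.IsMatching) (t : Finset (Sym2 V)) (ht : (t : Set (Sym2 V)) = M.edgeSet) :
    mset t := by
  constructor
  · intro e he
    exact matching_edge_nondiag e (ht ▸ (Finset.mem_coe.2 he))
  · intro e he f hf v hve hvf
    have heE : e ∈ M.edgeSet := ht ▸ (Finset.mem_coe.2 he)
    have hfE : f ∈ M.edgeSet := ht ▸ (Finset.mem_coe.2 hf)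
    have hvV : v ∈ M.verts := by
      induction e using Sym2.inductionOn with
      | hf x y =>
        rcases Sym2.mem_iff.1 hve with rfl | rfl
        · exact M.edge_vert (SimpleGraph.Subgraph.mem_edgeSet.1 heE)
        · exact M.edge_vert (SimpleGraph.Subgraph.mem_edgeSet.1 heE).symm
    obtain ⟨g, -, hu⟩ := matching_unique_edge hM hvV
    rw [hu e ⟨heE, hve⟩, hu f ⟨hfE, hvf⟩]

lemma matching_ext {V : Type} {H : SimpleGraph V} {M1 M2 : H.Subgraph}
    (h1 : M1.IsMatching) (h2 : M2.IsMatching) (he : M1.edgeSet = M2.edgeSet) :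
    M1 = M2 := by
  have hadj : M1.Adj = M2.Adj := by
    ext v w
    rw [← SimpleGraph.Subgraph.mem_edgeSet, ← SimpleGraph.Subgraph.mem_edgeSet, he]
  have hv : M1.verts = M2.verts := by
    rw [← h1.support_eq_verts, ← h2.support_eq_verts,
      SimpleGraph.Subgraph.support, SimpleGraph.Subgraph.support, hadj]
  exact SimpleGraph.Subgraph.ext hv hadj

lemma pmCount_eq {V : Type} [Fintype V] (G : SimpleGraph V) :
    pmCount G =
      {P : Finset (Sym2 V) | pmatch Finset.univ P ∧ ↑P ⊆ G.edgeSet}.ncard := by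
  classical
  rw [pmCount]
  have hinj : Set.InjOn (fun M : G.Subgraph => M.edgeSet.toFinite.toFinset)
      {M : G.Subgraph | M.IsPerfectMatching} := by
    rintro M1 h1 M2 h2 h
    exact matching_ext h1.1 h2.1 (by rwa [Set.Finite.toFinset_inj] at h)
  have himg : (fun M : G.Subgraph => M.edgeSet.toFinite.toFinset) ''
      {M : G.Subgraph | M.IsPerfectMatching}
      = {P : Finset (Sym2 V) | pmatch Finset.univ P ∧ ↑P ⊆ G.edgeSet} := by
    ext P
    constructor
    · rintro ⟨M, hM, rfl⟩
      have hcoe : (↑(M.edgeSet.toFinite.toFinset) : Set (Sym2 V)) = M.edgeSet :=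
        Set.Finite.coe_toFinset _
      refine ⟨⟨?_, fun e _ v _ => Finset.mem_univ v, ?_⟩, ?_⟩
      · intro e he
        exact matching_edge_nondiag e ((Set.Finite.mem_toFinset _).1 he)
      · intro a _
        obtain ⟨e, ⟨heE, hae⟩, hu⟩ := matching_unique_edge hM.1 (hM.2 a)
        exact ⟨e, ⟨(Set.Finite.mem_toFinset _).2 heE, hae⟩,
          fun f ⟨hf, haf⟩ => hu f ⟨(Set.Finite.mem_toFinset _).1 hf, haf⟩⟩
      · rw [hcoe]
        exact M.edgeSet_subset
    · rintro ⟨hp, hsub⟩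
      refine ⟨msub G P hsub, ⟨msub_isMatching G P hsub hp.mset, fun v => ?_⟩, ?_⟩
      · obtain ⟨e, ⟨heP, hve⟩, -⟩ := hp.2.2 v (Finset.mem_univ v)
        exact ⟨e, heP, hve⟩
      · ext e
        rw [Set.Finite.mem_toFinset, msub_edgeSet]
        exact Finset.mem_coe
  rw [← himg, Set.ncard_image_of_injOn hinj]

lemma matchCount_eq {V : Type} [Fintype V] (H : SimpleGraph V) (k : ℕ) :
    matchCount H k =
      {s : Finset (Sym2 V) | mset s ∧ ↑s ⊆ H.edgeSet ∧ s.card = k}.ncard := by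
  classical
  rw [matchCount]
  have hinj : Set.InjOn (fun M : H.Subgraph => M.edgeSet.toFinite.toFinset)
      {M : H.Subgraph | M.IsMatching ∧ M.edgeSet.ncard = k} := by
    rintro M1 h1 M2 h2 h
    exact matching_ext h1.1 h2.1 (by rwa [Set.Finite.toFinset_inj] at h)
  have himg : (fun M : H.Subgraph => M.edgeSet.toFinite.toFinset) ''
      {M : H.Subgraph | M.IsMatching ∧ M.edgeSet.ncard = k}
      = {s : Finset (Sym2 V) | mset s ∧ ↑s ⊆ H.edgeSet ∧ s.card = k} := by
    ext P
    constructor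
    · rintro ⟨M, ⟨hM, hk⟩, rfl⟩
      have hcoe : (↑(M.edgeSet.toFinite.toFinset) : Set (Sym2 V)) = M.edgeSet :=
        Set.Finite.coe_toFinset _
      refine ⟨matching_mset hM _ hcoe, ?_, ?_⟩
      · rw [hcoe]; exact M.edgeSet_subset
      · rw [← hk, ← hcoe, Set.ncard_coe_finset]
    · rintro ⟨hm, hsub, hk⟩
      refine ⟨msub H P hsub, ⟨msub_isMatching H P hsub hm, ?_⟩, ?_⟩
      · rw [msub_edgeSet, Set.ncard_coe_finset]; exact hk
      · ext e
        rw [Set.Finite.mem_toFinset, msub_edgeSet]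
        exact Finset.mem_coe
  rw [← himg, Set.ncard_image_of_injOn hinj]

/-- **Godsil–Zaslavsky identity.** For any graph `G` on `2n` vertices,
`pm(G) = ∑_{k=0}^n (-1)^k μ_k(Ḡ) (2n-2k-1)!!`. -/
theorem stmt_14 {V : Type} [Fintype V] (n : ℕ) (hV : Fintype.card V = 2 * n)
    (G : SimpleGraph V) :
    (pmCount G : ℤ) =
      ∑ k ∈ Finset.range (n + 1),
        (-1 : ℤ) ^ k * (matchCount Gᶜ k : ℤ) * ((2 * n - 2 * k - 1)‼ : ℤ) := by
  classical
  set Ec : Finset (Sym2 V) := (Gᶜ.edgeSet).toFinite.toFinset with hEc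
  have hEcmem : ∀ e, e ∈ Ec ↔ e ∈ Gᶜ.edgeSet := fun e => Set.Finite.mem_toFinset _
  have huniv : (Finset.univ : Finset V).card = 2 * n := by rw [Finset.card_univ, hV]
  have hcompl : ∀ e : Sym2 V, ¬ e.IsDiag → (e ∈ G.edgeSet ↔ e ∉ Gᶜ.edgeSet) := by
    intro e hd
    induction e using Sym2.inductionOn with
    | hf x y =>
      have hxy : x ≠ y := fun h => hd (Sym2.mk_isDiag_iff.2 h)
      simp only [SimpleGraph.mem_edgeSet, SimpleGraph.compl_adj, not_and, not_not]
      exact ⟨fun h _ => h, fun h => h hxy⟩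
  have hA : {P : Finset (Sym2 V) | pmatch Finset.univ P ∧ ↑P ⊆ G.edgeSet}
      = {P : Finset (Sym2 V) | pmatch Finset.univ P ∧ P ∩ Ec = ∅} := by
    ext P
    simp only [Set.mem_setOf_eq, and_congr_right_iff]
    intro hp
    rw [Finset.eq_empty_iff_forall_notMem]
    constructor
    · intro hsub e he
      obtain ⟨heP, heEc⟩ := Finset.mem_inter.1 he
      exact (hcompl e (hp.1 e heP)).1 (hsub heP) ((hEcmem e).1 heEc)
    · intro hno e heP
      have heP' : e ∈ P := heP
      have : e ∉ Ec := fun h => hno e (Finset.mem_inter.2 ⟨heP', h⟩)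
      exact (hcompl e (hp.1 e heP')).2 (fun h => this ((hEcmem e).2 h))
  have hsubT : ∀ P : Finset (Sym2 V), (pmatch Finset.univ P ∧ P ∩ Ec = ∅) →
      P ⊆ Finset.univ.sym2 :=
    fun P _ e _ => Finset.mem_sym2_iff.2 (fun a _ => Finset.mem_univ a)
  have hB : pmCount G = ((Finset.univ.sym2.powerset).filter
      (fun P => pmatch Finset.univ P ∧ P ∩ Ec = ∅)).card := by
    rw [pmCount_eq, hA, ncard_filter _ hsubT]
  have hsplit : (Finset.univ.sym2.powerset).filter
      (fun P => pmatch Finset.univ P ∧ P ∩ Ec = ∅)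
      = (Finset.univ.sym2.powerset.filter (fun P => pmatch Finset.univ P)).filter
          (fun P => P ∩ Ec = ∅) := by
    rw [Finset.filter_filter]
  rw [hB, hsplit, Finset.card_filter, Nat.cast_sum]
  simp only [Nat.cast_ite, Nat.cast_one, Nat.cast_zero]
  have hstep1 : ∀ P ∈ Finset.univ.sym2.powerset.filter (fun P => pmatch Finset.univ P),
      (if P ∩ Ec = ∅ then (1:ℤ) else 0)
      = ∑ s ∈ Ec.powerset, (if s ⊆ P then (-1:ℤ)^s.card else 0) := by
    intro P _
    rw [← Finset.sum_filter]
    have hpow : Ec.powerset.filter (fun s => s ⊆ P) = (P ∩ Ec).powerset := by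
      ext s
      simp only [Finset.mem_filter, Finset.mem_powerset, Finset.subset_inter_iff]
      tauto
    rw [hpow, Finset.sum_powerset_neg_one_pow_card]
  rw [Finset.sum_congr rfl hstep1, Finset.sum_comm]
  have hstep2 : ∀ s ∈ Ec.powerset,
      (∑ P ∈ Finset.univ.sym2.powerset.filter (fun P => pmatch Finset.univ P),
        if s ⊆ P then (-1:ℤ)^s.card else 0)
      = (if mset s then ((2*(n - s.card) - 1)‼ : ℤ) else 0) * (-1:ℤ)^s.card := by
    intro s _
    rw [← Finset.sum_filter, Finset.sum_const, nsmul_eq_mul]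
    congr 1
    have hff : (Finset.univ.sym2.powerset.filter
          (fun P => pmatch Finset.univ P)).filter (fun P => s ⊆ P)
        = Finset.univ.sym2.powerset.filter (fun P => pmatch Finset.univ P ∧ s ⊆ P) := by
      rw [Finset.filter_filter]
    have hnc : {P : Finset (Sym2 V) | pmatch Finset.univ P ∧ s ⊆ P}.ncard
        = (Finset.univ.sym2.powerset.filter
            (fun P => pmatch Finset.univ P ∧ s ⊆ P)).card :=
      ncard_filter _ (fun P _ e _ => Finset.mem_sym2_iff.2 (fun a _ => Finset.mem_univ a))
    by_cases hm : mset s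
    · obtain ⟨-, h2⟩ := count_ext s n Finset.univ huniv hm (fun e _ v _ => Finset.mem_univ v)
      rw [hff, ← hnc, h2, if_pos hm]
    · rw [if_neg hm, hff, ← hnc]
      have hempty : {P : Finset (Sym2 V) | pmatch Finset.univ P ∧ s ⊆ P} = ∅ := by
        ext P
        simp only [Set.mem_setOf_eq, Set.mem_empty_iff_false, iff_false, not_and]
        intro hP hsub
        exact hm (hP.mset.subset hsub)
      rw [hempty, Set.ncard_empty, Nat.cast_zero]
  rw [Finset.sum_congr rfl hstep2]
  simp only [ite_mul, zero_mul]
  rw [← Finset.sum_filter]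
  have hmaps : ∀ s ∈ Ec.powerset.filter mset, s.card ∈ Finset.range (n+1) := by
    intro s hs
    obtain ⟨-, hm⟩ := Finset.mem_filter.1 hs
    have := (count_ext s n Finset.univ huniv hm (fun e _ v _ => Finset.mem_univ v)).1
    rw [Finset.mem_range]
    omega
  rw [← Finset.sum_fiberwise_of_maps_to hmaps]
  apply Finset.sum_congr rfl
  intro k hk
  have hkn : k ≤ n := by rw [Finset.mem_range] at hk; omega
  have hinner : ∀ s ∈ (Ec.powerset.filter mset).filter (fun s => s.card = k),
      ((2*(n - s.card) - 1)‼ : ℤ) * (-1:ℤ)^s.card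
      = ((2*n - 2*k - 1)‼ : ℤ) * (-1:ℤ)^k := by
    intro s hs
    have hck : s.card = k := (Finset.mem_filter.1 hs).2
    rw [hck]
    have harith : 2*(n - k) - 1 = 2*n - 2*k - 1 := by omega
    rw [harith]
  rw [Finset.sum_congr rfl hinner, Finset.sum_const, nsmul_eq_mul]
  have hmc : (((Ec.powerset.filter mset).filter (fun s => s.card = k)).card : ℤ)
      = (matchCount Gᶜ k : ℤ) := by
    congr 1
    rw [matchCount_eq]
    rw [ncard_filter (fun s : Finset (Sym2 V) => mset s ∧ ↑s ⊆ Gᶜ.edgeSet ∧ s.card = k)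
      (fun s _ e _ => Finset.mem_sym2_iff.2 (fun a _ => Finset.mem_univ a))]
    congr 1
    ext s
    simp only [Finset.mem_filter, Finset.mem_powerset]
    constructor
    · rintro ⟨⟨hsub, hm⟩, hc⟩
      exact ⟨fun e _ => Finset.mem_sym2_iff.2 (fun a _ => Finset.mem_univ a),
        hm, fun e he => (hEcmem e).1 (hsub (Finset.mem_coe.1 he)), hc⟩
    · rintro ⟨-, hm, hsub, hc⟩
      exact ⟨⟨fun e he => (hEcmem e).2 (hsub (Finset.mem_coe.2 he)), hm⟩, hc⟩
  rw [hmc]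
  ring
end
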